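/- Let P be a feedback family and Q a forward family. For every Borel probability measure λ on Y_{0,n}, I(←P, →Q) ≤ D(←P⊗→Q ‖ ←P⊗λ), and I(←P, →Q) = inf_λ D(←P⊗→Q ‖ ←P⊗λ), where the infimum is over all Borel probability measures λ on Y_{0,n} and is attained at λ = ν_{0,n}, the Y_{0,n}-marginal of ←P⊗→Q. -/

import Mathlib

/-! The law of `(y^n, x^n)` under `←P⊗→Q` disintegrates as `ν_{0,n} ⊗ η` (the spaces are standard
Borel), while `←P⊗λ` is, after swapping the factors, `λ ⊗ ←P_{0,n}`. The chain rule for the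
Kullback–Leibler divergence then gives
`D(←P⊗→Q ‖ ←P⊗λ) = D(ν_{0,n} ‖ λ) + D(←P⊗→Q ‖ ←P⊗ν_{0,n}) ≥ I(←P,→Q)`. -/

open MeasureTheory ProbabilityTheory Filter
open scoped ENNReal NNReal

namespace PaperDI

lemma measurable_finSnoc {Z : ℕ → Type*} [∀ i, MeasurableSpace (Z i)] (k : ℕ) :
    Measurable (fun p : (∀ j : Fin k, Z j) × Z k =>
      (Fin.snoc p.1 p.2 : ∀ j : Fin (k + 1), Z j)) := by
  apply measurable_pi_lambda
  intro j
  induction j using Fin.lastCases with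
  | last => simpa using measurable_snd
  | cast i => simp <;> exact (measurable_pi_apply i).comp measurable_fst

/-- Restriction of a prefix of length `k+1` to the prefix of length `k`. -/
def restr {Z : ℕ → Type*} (k : ℕ) (z : ∀ j : Fin (k + 1), Z j) : ∀ j : Fin k, Z j :=
  fun j => z j.castSucc

lemma measurable_restr {Z : ℕ → Type*} [∀ i, MeasurableSpace (Z i)] (k : ℕ) :
    Measurable (restr (Z := Z) k) :=
  measurable_pi_lambda _ fun _ => measurable_pi_apply _

variable (X Y : ℕ → Type*) [∀ i, MeasurableSpace (X i)] [∀ i, MeasurableSpace (Y i)]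

/-- A feedback family `(p_0, …, p_n)`: `p_0` is a probability measure on `X_0` (a Markov
kernel from the one-point space of empty prefixes) and `p_i` is a Markov kernel from
`X_{0,i-1} × Y_{0,i-1}` to `X_i`. -/
structure FeedbackFamily (n : ℕ) where
  p : ∀ i : Fin (n + 1), Kernel ((∀ j : Fin (i : ℕ), X j) × (∀ j : Fin (i : ℕ), Y j)) (X i)
  markov : ∀ i, IsMarkovKernel (p i)

/-- A forward family `(q_0, …, q_n)`: `q_i` is a Markov kernel from
`Y_{0,i-1} × X_{0,i}` to `Y_i`. -/
structure ForwardFamily (n : ℕ) where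
  q : ∀ i : Fin (n + 1), Kernel ((∀ j : Fin (i : ℕ), Y j) × (∀ j : Fin ((i : ℕ) + 1), X j)) (Y i)
  markov : ∀ i, IsMarkovKernel (q i)

variable {X Y} {n : ℕ}

/-- The causally conditioned kernel `←P_{0,k}` from `Y_{0,k-1}` to `X_{0,k}`. -/
noncomputable def back (P : FeedbackFamily X Y n) :
    (k : ℕ) → k ≤ n → Kernel (∀ j : Fin k, Y j) (∀ j : Fin (k + 1), X j)
  | 0, _ =>
      Kernel.map ((P.p ⟨0, Nat.succ_pos n⟩).comap (fun _ => default) measurable_const)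
        (fun x0 => (Fin.snoc default x0 : ∀ j : Fin 1, X j))
  | (k + 1), h =>
      Kernel.map
        (((back P k (by omega)).comap (restr k) (measurable_restr k)) ⊗ₖ
          ((P.p ⟨k + 1, by omega⟩).comap
            (fun t : (∀ j : Fin (k + 1), Y j) × (∀ j : Fin (k + 1), X j) => (t.2, t.1))
            (measurable_snd.prodMk measurable_fst)))
        (fun t : (∀ j : Fin (k + 1), X j) × X (k + 1) =>
          (Fin.snoc t.1 t.2 : ∀ j : Fin (k + 2), X j))

/-- The causally conditioned kernel `→Q_{0,k}` from `X_{0,k}` to `Y_{0,k}`. -/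
noncomputable def fwd (Q : ForwardFamily X Y n) :
    (k : ℕ) → k ≤ n → Kernel (∀ j : Fin (k + 1), X j) (∀ j : Fin (k + 1), Y j)
  | 0, _ =>
      Kernel.map ((Q.q ⟨0, Nat.succ_pos n⟩).comap (fun x => (default, x))
          (measurable_const.prodMk measurable_id))
        (fun y0 => (Fin.snoc default y0 : ∀ j : Fin 1, Y j))
  | (k + 1), h =>
      Kernel.map
        (((fwd Q k (by omega)).comap (restr (k + 1)) (measurable_restr (k + 1))) ⊗ₖ
          ((Q.q ⟨k + 1, by omega⟩).comap
            (fun t : (∀ j : Fin (k + 2), X j) × (∀ j : Fin (k + 1), Y j) => (t.2, t.1))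
            (measurable_snd.prodMk measurable_fst)))
        (fun t : (∀ j : Fin (k + 1), Y j) × Y (k + 1) =>
          (Fin.snoc t.1 t.2 : ∀ j : Fin (k + 2), Y j))

/-- The interleaved joint measure of `←P ⊗ →Q` on prefixes of length `k`. -/
noncomputable def jointAux (P : FeedbackFamily X Y n) (Q : ForwardFamily X Y n) :
    (k : ℕ) → k ≤ n + 1 → Measure ((∀ j : Fin k, X j) × (∀ j : Fin k, Y j))
  | 0, _ => Measure.dirac default
  | (k + 1), h =>
      let μ1 := (jointAux P Q k (by omega)) ⊗ₘ (P.p ⟨k, by omega⟩)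
      let μ2 := μ1.map
          (fun t : ((∀ j : Fin k, X j) × (∀ j : Fin k, Y j)) × X k =>
            (t.1.2, (Fin.snoc t.1.1 t.2 : ∀ j : Fin (k + 1), X j)))
      let μ3 := μ2 ⊗ₘ (Q.q ⟨k, by omega⟩)
      μ3.map
          (fun t : ((∀ j : Fin k, Y j) × (∀ j : Fin (k + 1), X j)) × Y k =>
            (t.1.2, (Fin.snoc t.1.1 t.2 : ∀ j : Fin (k + 1), Y j)))

/-- The joint measure `←P ⊗ →Q` on `X_{0,n} × Y_{0,n}`. -/
noncomputable def joint (P : FeedbackFamily X Y n) (Q : ForwardFamily X Y n) :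
    Measure ((∀ j : Fin (n + 1), X j) × (∀ j : Fin (n + 1), Y j)) :=
  jointAux P Q (n + 1) le_rfl

/-- The marginal `ν_{0,n}` of `←P ⊗ →Q` on `Y_{0,n}`. -/
noncomputable def nu (P : FeedbackFamily X Y n) (Q : ForwardFamily X Y n) :
    Measure (∀ j : Fin (n + 1), Y j) :=
  (joint P Q).map Prod.snd

/-- The measure `←P ⊗ λ` on `X_{0,n} × Y_{0,n}`, i.e. the measure
`←P_{0,n}(dx^n | y^{n-1}) ⊗ λ(dy^n)`. -/
noncomputable def backProd (P : FeedbackFamily X Y n) (lam : Measure (∀ j : Fin (n + 1), Y j)) :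
    Measure ((∀ j : Fin (n + 1), X j) × (∀ j : Fin (n + 1), Y j)) :=
  (lam ⊗ₘ ((back P n le_rfl).comap (restr n) (measurable_restr n))).map Prod.swap

open Classical in
/-- Kullback-Leibler divergence (relative entropy) `D(μ ‖ ν)`, with the convention
`D(μ ‖ ν) = ∞` when absolute continuity fails. -/
noncomputable def KL {Z : Type*} [MeasurableSpace Z] (μ ν : Measure Z) : ℝ≥0∞ :=
  if μ ≪ ν ∧ Integrable (llr μ ν) μ then ENNReal.ofReal (∫ z, llr μ ν z ∂μ) else ⊤

/-- Directed information `I(←P, →Q) = D(←P ⊗ →Q ‖ ←P ⊗ ν_{0,n})`. -/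
noncomputable def DI (P : FeedbackFamily X Y n) (Q : ForwardFamily X Y n) : ℝ≥0∞ :=
  KL (joint P Q) (backProd P (nu P Q))

/-- Weak convergence of a sequence of measures: integrals of every bounded continuous
real-valued function converge. -/
def WeakTendsto {Z : Type*} [MeasurableSpace Z] [TopologicalSpace Z]
    (μ : ℕ → Measure Z) (μ0 : Measure Z) : Prop :=
  ∀ f : BoundedContinuousFunction Z ℝ,
    Tendsto (fun α => ∫ z, f z ∂(μ α)) atTop (nhds (∫ z, f z ∂μ0))

/-- Uniform tightness of a family of measures. -/
def UniformlyTight {Z : Type*} [MeasurableSpace Z] [TopologicalSpace Z]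
    (M : Set (Measure Z)) : Prop :=
  ∀ ε : ℝ≥0∞, 0 < ε → ∃ K : Set Z, IsCompact K ∧ ∀ μ ∈ M, 1 - ε ≤ μ K

/-- The marginal `π_i` of `←P ⊗ →Q` on `X_{0,i} × Y_{0,i-1}`. -/
noncomputable def margin (P : FeedbackFamily X Y n) (Q : ForwardFamily X Y n) (i : Fin (n + 1)) :
    Measure ((∀ j : Fin ((i : ℕ) + 1), X j) × (∀ j : Fin (i : ℕ), Y j)) :=
  (joint P Q).map (fun t =>
    ((fun j : Fin ((i : ℕ) + 1) => t.1 (Fin.castLE i.isLt j)),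
     (fun j : Fin (i : ℕ) => t.2 (Fin.castLE i.isLt.le j))))

/-- The iterated product measure of a tuple of kernels `(λ_0, …, λ_n)`,
`λ_i : Y_{0,i-1} → Y_i`, on prefixes of length `k`. -/
noncomputable def chain {Z : ℕ → Type*} [∀ i, MeasurableSpace (Z i)] {n : ℕ}
    (lam : ∀ i : Fin (n + 1), Kernel (∀ j : Fin (i : ℕ), Z j) (Z i)) :
    (k : ℕ) → k ≤ n + 1 → Measure (∀ j : Fin k, Z j)
  | 0, _ => Measure.dirac default
  | (k + 1), h =>
      ((chain lam k (by omega)) ⊗ₘ (lam ⟨k, by omega⟩)).map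
        (fun t : (∀ j : Fin k, Z j) × Z k => (Fin.snoc t.1 t.2 : ∀ j : Fin (k + 1), Z j))

/-- The joint measure `←S ⊗ →R` on `X_{0,n} × Y_{0,n}` determined by a reversed pair
`(S, R)`; a reversed pair is formally a feedback family and a forward family with the
roles of `X` and `Y` interchanged. -/
noncomputable def revJoint (S : FeedbackFamily Y X n) (R : ForwardFamily Y X n) :
    Measure ((∀ j : Fin (n + 1), X j) × (∀ j : Fin (n + 1), Y j)) :=
  (joint S R).map Prod.swap

/-- `∫ log(dσ/dπ) dμ`, as an extended real number (integral of the positive part minus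
integral of the negative part). -/
noncomputable def elogInt {Z : Type*} [MeasurableSpace Z] (σ π μ : Measure Z) : EReal :=
  ((∫⁻ z, ENNReal.ofReal (llr σ π z) ∂μ : ℝ≥0∞) : EReal) -
    ((∫⁻ z, ENNReal.ofReal (-llr σ π z) ∂μ : ℝ≥0∞) : EReal)

/-- `∫ |log(dμ/dν)| dμ`. -/
noncomputable def absKL {Z : Type*} [MeasurableSpace Z] (μ ν : Measure Z) : ℝ≥0∞ :=
  ∫⁻ z, ENNReal.ofReal |llr μ ν z| ∂μ

section Topology

variable [∀ i, TopologicalSpace (X i)] [∀ i, TopologicalSpace (Y i)]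

/-- Condition (CA): each `p_i` is weakly (Feller) continuous in the conditioning
variables `(x^{i-1}, y^{i-1})`. -/
def CondCA (P : FeedbackFamily X Y n) : Prop :=
  ∀ (i : Fin (n + 1)) (g : BoundedContinuousFunction (X i) ℝ),
    Continuous (fun t : (∀ j : Fin (i : ℕ), X j) × (∀ j : Fin (i : ℕ), Y j) =>
      ∫ x, g x ∂(P.p i t))

/-- Condition (CB): each `q_i` is weakly (Feller) continuous in the conditioning
variables `(x^i, y^{i-1})`. -/
def CondCB (Q : ForwardFamily X Y n) : Prop :=
  ∀ (i : Fin (n + 1)) (g : BoundedContinuousFunction (Y i) ℝ),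
    Continuous (fun t : (∀ j : Fin ((i : ℕ) + 1), X j) × (∀ j : Fin (i : ℕ), Y j) =>
      ∫ y, g y ∂(Q.q i (t.2, t.1)))

end Topology

open InformationTheory

section General

variable {α β : Type*} [MeasurableSpace α] [MeasurableSpace β]

lemma klDiv_map_swap (μ ν : Measure (α × β)) [IsFiniteMeasure μ] [IsFiniteMeasure ν] :
    klDiv (μ.map Prod.swap) (ν.map Prod.swap) = klDiv μ ν := by
  refine le_antisymm (klDiv_map_le μ ν measurable_swap) ?_
  simpa [Measure.map_map measurable_swap measurable_swap] using
    klDiv_map_le (μ.map Prod.swap) (ν.map Prod.swap) measurable_swap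

lemma klDiv_le_klDiv_compProd [StandardBorelSpace β] [Nonempty β]
    (ρ : Measure (α × β)) [IsFiniteMeasure ρ] (lam : Measure α) [IsFiniteMeasure lam]
    (κ : Kernel α β) [IsMarkovKernel κ] :
    klDiv ρ (ρ.fst ⊗ₘ κ) ≤ klDiv ρ (lam ⊗ₘ κ) := by
  have hρ : ρ.fst ⊗ₘ ρ.condKernel = ρ := ρ.disintegrate ρ.condKernel
  calc klDiv ρ (ρ.fst ⊗ₘ κ) = klDiv (ρ.fst ⊗ₘ ρ.condKernel) (ρ.fst ⊗ₘ κ) := by rw [hρ]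
    _ ≤ klDiv ρ.fst lam + klDiv (ρ.fst ⊗ₘ ρ.condKernel) (ρ.fst ⊗ₘ κ) := le_add_self
    _ = klDiv ρ (lam ⊗ₘ κ) := by rw [← klDiv_compProd_eq_add, hρ]

lemma KL_eq_klDiv {μ ν : Measure α} (h : μ Set.univ = ν Set.univ) : KL μ ν = klDiv μ ν := by
  rw [KL, klDiv_def]
  split_ifs <;> simp [measureReal_def, h]

end General

section Development

variable {X Y : ℕ → Type*} [∀ i, MeasurableSpace (X i)] [∀ i, MeasurableSpace (Y i)] {n : ℕ}

lemma isProbabilityMeasure_map_compProd_snoc {Z : ℕ → Type*} [∀ i, MeasurableSpace (Z i)]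
    {W : Type*} [MeasurableSpace W] {k : ℕ} (μ : Measure ((∀ j : Fin k, Z j) × W))
    [IsProbabilityMeasure μ] (κ : Kernel ((∀ j : Fin k, Z j) × W) (Z k)) [IsMarkovKernel κ] :
    IsProbabilityMeasure ((μ ⊗ₘ κ).map fun t =>
      (t.1.2, (Fin.snoc t.1.1 t.2 : ∀ j : Fin (k + 1), Z j))) :=
  Measure.isProbabilityMeasure_map <|
    (measurable_fst.snd.prodMk ((measurable_finSnoc k).comp
      (measurable_fst.fst.prodMk measurable_snd))).aemeasurable

lemma isProbabilityMeasure_jointAux (P : FeedbackFamily X Y n) (Q : ForwardFamily X Y n) :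
    ∀ (k : ℕ) (h : k ≤ n + 1), IsProbabilityMeasure (jointAux P Q k h)
  | 0, _ => by rw [jointAux]; infer_instance
  | (k + 1), h => by
      have := isProbabilityMeasure_jointAux P Q k (by omega)
      have := P.markov ⟨k, by omega⟩
      have := Q.markov ⟨k, by omega⟩
      rw [jointAux]
      have := isProbabilityMeasure_map_compProd_snoc (jointAux P Q k _) (P.p ⟨k, _⟩)
      exact isProbabilityMeasure_map_compProd_snoc _ _

instance isProbabilityMeasure_joint (P : FeedbackFamily X Y n) (Q : ForwardFamily X Y n) :
    IsProbabilityMeasure (joint P Q) :=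
  isProbabilityMeasure_jointAux P Q (n + 1) le_rfl

instance isProbabilityMeasure_nu (P : FeedbackFamily X Y n) (Q : ForwardFamily X Y n) :
    IsProbabilityMeasure (nu P Q) :=
  Measure.isProbabilityMeasure_map measurable_snd.aemeasurable

lemma isMarkovKernel_back (P : FeedbackFamily X Y n) :
    ∀ (k : ℕ) (h : k ≤ n), IsMarkovKernel (back P k h)
  | 0, _ => by
      have := P.markov ⟨0, Nat.succ_pos n⟩
      rw [back]
      exact Kernel.IsMarkovKernel.map _
        ((measurable_finSnoc 0).comp (measurable_const.prodMk measurable_id))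
  | (k + 1), h => by
      have := isMarkovKernel_back P k (by omega)
      have := P.markov ⟨k + 1, by omega⟩
      rw [back]
      exact Kernel.IsMarkovKernel.map _ (measurable_finSnoc (k + 1))

/-- `←P_{0,n}(dx^n | y^{n-1})` as a kernel on `Y_{0,n}`. -/
noncomputable def backKernel (P : FeedbackFamily X Y n) :
    Kernel (∀ j : Fin (n + 1), Y j) (∀ j : Fin (n + 1), X j) :=
  (back P n le_rfl).comap (restr n) (measurable_restr n)

instance isMarkovKernel_backKernel (P : FeedbackFamily X Y n) : IsMarkovKernel (backKernel P) :=
  have := isMarkovKernel_back P n le_rfl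
  Kernel.IsMarkovKernel.comap _ _

lemma backProd_eq_map_swap (P : FeedbackFamily X Y n) (lam : Measure (∀ j : Fin (n + 1), Y j)) :
    backProd P lam = (lam ⊗ₘ backKernel P).map Prod.swap := rfl

lemma nu_eq_fst_map_swap (P : FeedbackFamily X Y n) (Q : ForwardFamily X Y n) :
    nu P Q = ((joint P Q).map Prod.swap).fst := by
  rw [Measure.fst_map_swap]; rfl

lemma KL_joint_backProd (P : FeedbackFamily X Y n) (Q : ForwardFamily X Y n)
    (lam : Measure (∀ j : Fin (n + 1), Y j)) [IsProbabilityMeasure lam] :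
    KL (joint P Q) (backProd P lam) =
      klDiv ((joint P Q).map Prod.swap) (lam ⊗ₘ backKernel P) := by
  rw [KL_eq_klDiv (by simp [backProd_eq_map_swap, Measure.map_apply measurable_swap .univ]),
    backProd_eq_map_swap, ← klDiv_map_swap]
  simp [Measure.map_map measurable_swap measurable_swap]

lemma DI_le_KL_backProd [∀ i, StandardBorelSpace (X i)]
    (P : FeedbackFamily X Y n) (Q : ForwardFamily X Y n)
    (lam : Measure (∀ j : Fin (n + 1), Y j)) [IsProbabilityMeasure lam] :
    DI P Q ≤ KL (joint P Q) (backProd P lam) := by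
  have : Nonempty (∀ j : Fin (n + 1), X j) :=
    (nonempty_of_isProbabilityMeasure (joint P Q)).map Prod.fst
  rw [DI, KL_joint_backProd, KL_joint_backProd, nu_eq_fst_map_swap]
  exact klDiv_le_klDiv_compProd _ _ _

end Development

section Statements

variable {X Y : ℕ → Type*} {n : ℕ}
  [∀ i, TopologicalSpace (X i)] [∀ i, MeasurableSpace (X i)] [∀ i, BorelSpace (X i)]
  [∀ i, PolishSpace (X i)]
  [∀ i, TopologicalSpace (Y i)] [∀ i, MeasurableSpace (Y i)] [∀ i, BorelSpace (Y i)]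
  [∀ i, PolishSpace (Y i)]

/-- Variational equality (minimization): for every probability
measure `λ` on `Y_{0,n}`, `I(←P,→Q) ≤ D(←P⊗→Q ‖ ←P⊗λ)`, and `I(←P,→Q)` equals the
infimum over all such `λ`, attained at the marginal `ν_{0,n}`. -/
theorem directedInfo_variational_min
    (P : FeedbackFamily X Y n) (Q : ForwardFamily X Y n) :
    (∀ lam : Measure (∀ j : Fin (n + 1), Y j), IsProbabilityMeasure lam →
      DI P Q ≤ KL (joint P Q) (backProd P lam)) ∧
    (DI P Q = ⨅ (lam : Measure (∀ j : Fin (n + 1), Y j)) (_ : IsProbabilityMeasure lam),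
      KL (joint P Q) (backProd P lam)) ∧
    DI P Q = KL (joint P Q) (backProd P (nu P Q)) := by
  have hle : ∀ lam : Measure (∀ j : Fin (n + 1), Y j), IsProbabilityMeasure lam →
      DI P Q ≤ KL (joint P Q) (backProd P lam) := fun lam _ => DI_le_KL_backProd P Q lam
  exact ⟨hle, le_antisymm (le_iInf₂ hle) (iInf₂_le (nu P Q) (isProbabilityMeasure_nu P Q)), rfl⟩

end Statements

end PaperDI
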